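/- arXiv:1004.2753 — 3 statements merged into one kernel-verified Lean document; each statement's English description precedes it below -/
import Mathlib

section
/- For every integer m ≥ 2, the sum ∑_{r=0}^{m} (-1)^r * C(m,r) * C(m+r,r) / ((r+1)(m+r)) equals 0. -/
/-!
With `t_r = (-1)^r C(m,r) C(m+r,r)`, the summand `t_r / ((r+1)(m+r))` is hypergeometric in `r`, and
Gosper's algorithm produces the antidifference `G k = -t_k k (m² - k) / ((m+k) m² (m² - 1))`.
As `G 0 = 0` and `t_{m+1} = 0`, the sum telescopes to `G (m+1) - G 0 = 0`.
-/

open Finset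

namespace BinomialSum

def term (m r : ℕ) : ℚ := (-1) ^ r * m.choose r * (m + r).choose r

lemma cast_choose_succ_right_mul (m r : ℕ) :
    (m.choose (r + 1) : ℚ) * (r + 1) = m.choose r * ((m : ℚ) - r) := by
  rcases le_or_gt r m with hr | hr
  · rw [← Nat.cast_sub hr]
    exact_mod_cast Nat.choose_succ_right_eq m r
  · simp [Nat.choose_eq_zero_of_lt hr, Nat.choose_eq_zero_of_lt (Nat.lt_succ_of_lt hr)]

lemma term_succ_mul (m r : ℕ) :
    term m (r + 1) * (r + 1) ^ 2 = -term m r * ((m : ℚ) - r) * (m + r + 1) := by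
  have hm := cast_choose_succ_right_mul m r
  have hmr : ((m + r + 1).choose (r + 1) : ℚ) * (r + 1) = (m + r).choose r * (m + r + 1) := by
    exact_mod_cast (Nat.add_one_mul_choose_eq (m + r) r).symm.trans (mul_comm _ _)
  unfold term
  rw [← add_assoc]
  linear_combination (-1 : ℚ) ^ (r + 1) * ((m + r + 1).choose (r + 1) * (r + 1) * hm
    + m.choose r * (m - r) * hmr)

def antidiff (m k : ℕ) : ℚ :=
  -term m k * k * ((m : ℚ) ^ 2 - k) / ((m + k) * (m ^ 2 * (m ^ 2 - 1)))

lemma summand_eq_antidiff_sub {m : ℕ} (hm : 2 ≤ m) (r : ℕ) :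
    term m r / ((r + 1) * (m + r)) = antidiff m (r + 1) - antidiff m r := by
  have hm_two : (2 : ℚ) ≤ m := by exact_mod_cast hm
  have hm_sq_sub_one : (m : ℚ) ^ 2 - 1 ≠ 0 := by nlinarith
  have hm_add : (m : ℚ) + (r + 1 : ℕ) ≠ 0 := by positivity
  unfold antidiff
  field_simp
  push_cast at hm_add ⊢
  linear_combination ((m : ℚ) + r) * ((m : ℚ) ^ 2 - (r + 1)) * term_succ_mul m r

lemma antidiff_zero (m : ℕ) : antidiff m 0 = 0 := by simp [antidiff]

lemma antidiff_succ_self (m : ℕ) : antidiff m (m + 1) = 0 := by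
  simp [antidiff, term]

end BinomialSum

open BinomialSum in
theorem stmt_0 (m : ℕ) (hm : 2 ≤ m) :
    ∑ r ∈ Finset.range (m + 1),
      ((-1 : ℚ) ^ r * (m.choose r) * ((m + r).choose r)) / ((r + 1) * (m + r)) = 0 := by
  calc _ = ∑ r ∈ range (m + 1), (antidiff m (r + 1) - antidiff m r) :=
        sum_congr rfl fun r _ => summand_eq_antidiff_sub hm r
    _ = antidiff m (m + 1) - antidiff m 0 := sum_range_sub _ _
    _ = 0 := by rw [antidiff_succ_self, antidiff_zero, sub_zero]
end

section
/- For nonnegative integers ℓ, m, s, n: ∑_{k} (-1)^k * C(ℓ, m+k) * C(s+k, n) = (-1)^{ℓ+m} * C(s-m, n-ℓ), where the right-hand generalized binomial coefficient is interpreted via the polynomial extension (in particular it is 0 if n-ℓ < 0, and defined by the falling factorial formula for negative upper entry). -/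
/-!
Substituting `k = j - m`, the sum becomes `(-1)^(ℓ+m)` times the `ℓ`-th forward difference of
`x ↦ C(x, n)` at `x = s - m`. Pascal's rule says that the forward difference of `C(x, k+1)` is
`C(x, k)`, so the `ℓ`-th difference of `C(x, n)` is `C(x, n - ℓ)`, and `0` once `ℓ > n`.
-/

open Finset Function Polynomial fwdDiff

/-- Generalized binomial coefficient `C(x, k)` for integer upper argument `x`
    and integer lower argument `k`, defined by the falling-factorial formula for
    `k ≥ 0` and equal to `0` for `k < 0`. -/
def gchoose (x : ℤ) (k : ℤ) : ℚ :=
  if k < 0 then 0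
  else (∏ j ∈ Finset.range k.toNat, ((x : ℚ) - (j : ℚ))) / (Nat.factorial k.toNat)

section BinomialRing

variable {R : Type*} [Ring R] [BinomialRing R]

theorem Ring.fwdDiff_choose_succ (k : ℕ) :
    Δ_[1] (fun r : R ↦ Ring.choose r (k + 1)) = fun r ↦ Ring.choose r k := by
  ext r
  simp [fwdDiff, Ring.choose_succ_succ]

theorem Ring.fwdDiff_iter_choose (n ℓ : ℕ) :
    Δ_[1] ^[ℓ] (fun r : R ↦ Ring.choose r n) =
      fun r ↦ if ℓ ≤ n then Ring.choose r (n - ℓ) else 0 := by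
  induction ℓ with
  | zero => simp
  | succ ℓ ih =>
    rw [iterate_succ_apply', ih]
    rcases lt_trichotomy ℓ n with h | rfl | h
    · obtain ⟨k, rfl⟩ := Nat.exists_eq_add_of_lt h
      simp only [show ℓ ≤ ℓ + k + 1 by omega, show ℓ + 1 ≤ ℓ + k + 1 by omega, if_true,
        show ℓ + k + 1 - ℓ = k + 1 by omega, show ℓ + k + 1 - (ℓ + 1) = k by omega]
      exact Ring.fwdDiff_choose_succ k
    · simp
    · simp [show ¬ ℓ ≤ n by omega, show ¬ ℓ + 1 ≤ n by omega]

theorem Ring.sum_range_neg_one_pow_mul_choose_mul_choose_add (r : R) (ℓ n : ℕ) :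
    ∑ j ∈ range (ℓ + 1), (-1) ^ (ℓ - j) * ℓ.choose j * Ring.choose (r + j) n =
      if ℓ ≤ n then Ring.choose r (n - ℓ) else 0 := by
  rw [← congr_fun (Ring.fwdDiff_iter_choose n ℓ) r, fwdDiff_iter_eq_sum_shift]
  simp [zsmul_eq_mul]

end BinomialRing

theorem gchoose_natCast (x : ℤ) (k : ℕ) : gchoose x k = Ring.choose (x : ℚ) k := by
  rw [Ring.choose_eq_smul, ← aeval_eq_smeval, aeval_def, ← eval_map, descPochhammer_map,
    descPochhammer_eval_eq_prod_range, gchoose, if_neg (by omega), smul_eq_mul, div_eq_inv_mul]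
  simp

theorem gchoose_natCast_sub_natCast (x : ℤ) (n ℓ : ℕ) :
    gchoose x ((n : ℤ) - ℓ) = if ℓ ≤ n then Ring.choose (x : ℚ) (n - ℓ) else 0 := by
  split_ifs with h
  · rw [← gchoose_natCast]; congr 1; omega
  · rw [gchoose, if_pos (by omega)]

theorem Finset.sum_Icc_neg_natCast {M : Type*} [AddCommMonoid M] (f : ℤ → M) (m ℓ : ℕ) :
    ∑ k ∈ Icc (-(m : ℤ)) (ℓ - m), f k = ∑ j ∈ range (ℓ + 1), f (j - m) := by
  refine sum_nbij' (fun k ↦ (k + m).toNat) (fun j ↦ (j : ℤ) - m) ?_ ?_ ?_ ?_ ?_ <;>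
    intro x hx <;> simp only [mem_Icc, mem_range] at hx ⊢
  all_goals grind

theorem neg_one_zpow_natCast_sub {K : Type*} [DivisionRing K] (ℓ m j : ℕ) (hj : j ≤ ℓ) :
    (-1 : K) ^ ((j : ℤ) - m) = (-1) ^ (ℓ + m) * (-1) ^ (ℓ - j) := by
  rw [← pow_add, ← Int.cast_negOnePow, ← Int.cast_negOnePow_natCast]
  congr 2
  rw [Int.negOnePow_eq_iff]
  exact ⟨(j : ℤ) - m - ℓ, by omega⟩

theorem stmt_3 (ℓ m s n : ℕ) :
    ∑ k ∈ Finset.Icc (-(m : ℤ)) ((ℓ : ℤ) - (m : ℤ)),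
      (-1 : ℚ) ^ k * (gchoose (ℓ : ℤ) ((m : ℤ) + k)) * (gchoose ((s : ℤ) + k) (n : ℤ))
      = (-1 : ℚ) ^ (ℓ + m) * gchoose ((s : ℤ) - (m : ℤ)) ((n : ℤ) - (ℓ : ℤ)) := by
  rw [Finset.sum_Icc_neg_natCast, gchoose_natCast_sub_natCast,
    ← Ring.sum_range_neg_one_pow_mul_choose_mul_choose_add, mul_sum]
  refine sum_congr rfl fun j hj ↦ ?_
  rw [neg_one_zpow_natCast_sub ℓ m j (by simpa [Nat.lt_succ_iff] using hj),
    add_sub_cancel, gchoose_natCast, gchoose_natCast, Int.cast_natCast, Ring.choose_natCast]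
  push_cast
  ring_nf
end

section
/- Let p ≥ 5 be a prime. Then ∑_{a,b ∈ F_p} ( ∑_{x ∈ F_p} χ(x³ − a·x − b) )² = p³ − p², where χ is the Legendre symbol (quadratic character) on F_p extended by χ(0)=0. -/
open Classical

noncomputable def legendreChar (p : ℕ) (x : ZMod p) : ℤ :=
  if x = 0 then 0 else if IsSquare x then 1 else -1

/-!
Expanding the square and summing over `b` first turns each term into a correlation
`∑ b, χ (u - b) * χ (v - b)` of the quadratic character, which is `p - 1` if `u = v` and `-1`
otherwise (a Jacobi sum computation). Summing then over `a`: for `x ≠ y` exactly one `a`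
(namely `x² + xy + y²`) gives `x³ - ax = y³ - ay`, so the off-diagonal pairs contribute
`(p - 1) - (p - 1) = 0` and only the `p` diagonal pairs remain, each contributing `p (p - 1)`.
-/

open Finset

section FiniteField

variable {F : Type*} [Field F]

theorem sub_mul_eq_sub_mul_iff_eq_div {h : F → F} {x y : F} (hxy : x ≠ y) (a : F) :
    h x - a * x = h y - a * y ↔ a = (h x - h y) / (x - y) := by
  rw [eq_div_iff (sub_ne_zero.mpr hxy)]
  constructor <;> intro e <;> linear_combination -e

variable [Fintype F] [DecidableEq F]

theorem MulChar.sum_mul_inv_add {R : Type*} [CommRing R] [IsDomain R] {χ : MulChar F R}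
    (hχ : χ ≠ 1) {c : F} (hc : c ≠ 0) : ∑ b : F, χ b * χ⁻¹ (b + c) = -1 := by
  have hterm : ∀ x : F, χ (-c * x) * χ⁻¹ (-c * x + c) = χ (-1) * (χ x * χ⁻¹ (1 - x)) := by
    intro x
    by_cases hx : x = 1
    · simp [hx]
    have hx' : 1 - x ≠ 0 := sub_ne_zero.mpr (Ne.symm hx)
    rw [MulChar.inv_apply', MulChar.inv_apply', ← map_mul, ← map_mul, ← map_mul,
      show -c * x + c = c * (1 - x) by ring]
    congr 1
    field_simp
  calc ∑ b : F, χ b * χ⁻¹ (b + c)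
      = ∑ x : F, χ (-c * x) * χ⁻¹ (-c * x + c) :=
        (Fintype.sum_equiv (Equiv.mulLeft₀ (-c) (neg_ne_zero.mpr hc)) _ _ fun _ => rfl).symm
    _ = χ (-1) * jacobiSum χ χ⁻¹ := by simp_rw [hterm, jacobiSum, mul_sum]
    _ = -1 := by
        rw [jacobiSum_nontrivial_inv hχ, mul_neg, ← map_mul, neg_one_mul, neg_neg, map_one]

theorem quadraticChar_sum_sq : ∑ b : F, quadraticChar F b ^ 2 = Fintype.card F - 1 := by
  rw [Fintype.sum_eq_add_sum_compl 0, quadraticChar_zero, zero_pow two_ne_zero, zero_add,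
    sum_congr rfl fun b hb => quadraticChar_sq_one (by simpa using hb), sum_const, card_compl,
    card_singleton, nsmul_one, Nat.cast_sub Fintype.card_pos, Nat.cast_one]

theorem quadraticChar_sum_mul_sub_sub (hF : ringChar F ≠ 2) (u v : F) :
    ∑ b : F, quadraticChar F (u - b) * quadraticChar F (v - b)
      = if u = v then (Fintype.card F : ℤ) - 1 else -1 := by
  have hshift : ∑ b : F, quadraticChar F (u - b) * quadraticChar F (v - b)
      = ∑ b : F, quadraticChar F b * quadraticChar F (b + (v - u)) :=
    Fintype.sum_equiv (Equiv.subLeft u) _ _ fun b => by simp only [Equiv.subLeft_apply]; ring_nf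
  rw [hshift]
  split_ifs with huv
  · simp only [huv, sub_self, add_zero, ← sq, quadraticChar_sum_sq]
  · have h := MulChar.sum_mul_inv_add (quadraticChar_ne_one hF) (sub_ne_zero.mpr (Ne.symm huv))
    rwa [(quadraticChar_isQuadratic F).inv] at h

theorem sum_sq_sum_quadraticChar_sub (hF : ringChar F ≠ 2) {ι : Type*} [Fintype ι] (f : ι → F) :
    ∑ b : F, (∑ x : ι, quadraticChar F (f x - b)) ^ 2
      = ∑ x : ι, ∑ y : ι, if f x = f y then (Fintype.card F : ℤ) - 1 else -1 := by
  simp_rw [sq, sum_mul_sum, ← quadraticChar_sum_mul_sub_sub hF]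
  rw [sum_comm]
  exact sum_congr rfl fun x _ => sum_comm

theorem sum_ite_sub_mul_eq_sub_mul (h : F → F) (x y : F) :
    ∑ a : F, (if h x - a * x = h y - a * y then (Fintype.card F : ℤ) - 1 else -1)
      = if x = y then (Fintype.card F : ℤ) * (Fintype.card F - 1) else 0 := by
  split_ifs with hxy
  · simp only [hxy, if_true, sum_const, card_univ, nsmul_eq_mul]
  · simp_rw [sub_mul_eq_sub_mul_iff_eq_div hxy]
    rw [Fintype.sum_eq_add_sum_compl ((h x - h y) / (x - y)), if_pos rfl,
      sum_congr rfl fun a ha => if_neg (by simpa using ha), sum_const, card_compl, card_singleton,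
      nsmul_eq_mul, Nat.cast_sub Fintype.card_pos, Nat.cast_one]
    ring

end FiniteField

theorem legendreChar_eq_quadraticChar (p : ℕ) [Fact p.Prime] (x : ZMod p) :
    legendreChar p x = quadraticChar (ZMod p) x := by
  rw [quadraticChar_apply, legendreChar, quadraticCharFun]
  split_ifs <;> rfl

theorem stmt_10 (p : ℕ) [Fact p.Prime] (hp5 : 5 ≤ p) :
    ∑ a : ZMod p, ∑ b : ZMod p,
      (∑ x : ZMod p, legendreChar p (x ^ 3 - a * x - b)) ^ 2
      = (p : ℤ) ^ 3 - (p : ℤ) ^ 2 := by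
  have hF : ringChar (ZMod p) ≠ 2 := by rw [ZMod.ringChar_zmod_n]; omega
  simp_rw [legendreChar_eq_quadraticChar, sum_sq_sum_quadraticChar_sub hF]
  calc ∑ a : ZMod p, ∑ x : ZMod p, ∑ y : ZMod p,
        (if x ^ 3 - a * x = y ^ 3 - a * y then (Fintype.card (ZMod p) : ℤ) - 1 else -1)
      = ∑ x : ZMod p, ∑ y : ZMod p, ∑ a : ZMod p,
        (if x ^ 3 - a * x = y ^ 3 - a * y then (Fintype.card (ZMod p) : ℤ) - 1 else -1) := by
        rw [sum_comm]; exact sum_congr rfl fun x _ => sum_comm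
    _ = ∑ x : ZMod p, ∑ y : ZMod p,
        if x = y then (Fintype.card (ZMod p) : ℤ) * (Fintype.card (ZMod p) - 1) else 0 := by
        simp_rw [sum_ite_sub_mul_eq_sub_mul (· ^ 3)]
    _ = (p : ℤ) ^ 3 - (p : ℤ) ^ 2 := by
        simp only [sum_ite_eq, mem_univ, if_true, sum_const, card_univ, ZMod.card, nsmul_eq_mul]
        ring
end
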